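/- ToFullMag preserves feasibility and produces full magazines: if L ∈ L (T_i ⊆ L_i, |L_i| ≤ C, with m ≥ C), then M = ToFullMag(L) satisfies T_i ⊆ M_i and |M_i| = C for all i = 1,…,n. -/
import Mathlib




def fillFrom (C : ℕ) (src dst : Finset ℕ) : Finset ℕ :=
  dst ∪ (((src \ dst).sort (· ≤ ·)).take (C - dst.card)).toFinset

def passPairs (C : ℕ) (pairs : List (ℕ × ℕ)) (L : ℕ → Finset ℕ) : ℕ → Finset ℕ :=
  pairs.foldl (fun M p => Function.update M p.2 (fillFrom C (M p.1) (M p.2))) L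

def fwdPairs (n : ℕ) : List (ℕ × ℕ) := (List.range (n - 1)).map (fun i => (i + 1, i + 2))

def bwdPairs (n : ℕ) : List (ℕ × ℕ) := (List.range (n - 1)).map (fun i => (n - i, n - i - 1))

def toFullMag (C n : ℕ) (L : ℕ → Finset ℕ) : ℕ → Finset ℕ :=
  passPairs C (bwdPairs n) (passPairs C (fwdPairs n) L)

def addRange (t s e : ℕ) (M : ℕ → Finset ℕ) : ℕ → Finset ℕ :=
  fun i => if s < i ∧ i < e then insert t (M i) else M i

def gpcaStep (C : ℕ) (T : ℕ → Finset ℕ) (e : ℕ) (M : ℕ → Finset ℕ) (t : ℕ) : ℕ → Finset ℕ :=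
  match ((List.range e).filter (fun s => decide (t ∈ T s))).max? with
  | none => M
  | some s => if ∀ i ∈ Finset.Ioo s e, (M i).card < C then addRange t s e M else M

def GPCA (C n : ℕ) (T : ℕ → Finset ℕ) : ℕ → Finset ℕ :=
  (List.range n).foldl
    (fun M e => ((T (e + 1)).sort (· ≤ ·)).foldl (gpcaStep C T (e + 1)) M) T


lemma fillFrom_subset (C : ℕ) (src dst : Finset ℕ) : dst ⊆ fillFrom C src dst :=
  Finset.subset_union_left

lemma fillFrom_subset_union (C : ℕ) (src dst : Finset ℕ) :
    fillFrom C src dst ⊆ src ∪ dst := by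
  apply Finset.union_subset Finset.subset_union_right
  intro x hx
  rw [List.mem_toFinset] at hx
  have hx' := List.take_subset _ _ hx
  rw [Finset.mem_sort] at hx'
  exact Finset.mem_union_left _ (Finset.mem_sdiff.mp hx').1

lemma fillFrom_card (C : ℕ) (src dst : Finset ℕ) (h : dst.card ≤ C) :
    (fillFrom C src dst).card = min C ((src ∪ dst).card) := by
  classical
  have hnd : ((src \ dst).sort (· ≤ ·)).Nodup := (src \ dst).sort_nodup _
  have htake : (((src \ dst).sort (· ≤ ·)).take (C - dst.card)).Nodup :=
    List.Nodup.sublist (List.take_sublist _ _) hnd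
  have hdisj : Disjoint dst ((((src \ dst).sort (· ≤ ·)).take (C - dst.card)).toFinset) := by
    rw [Finset.disjoint_right]
    intro x hx
    rw [List.mem_toFinset] at hx
    have hx' := List.take_subset _ _ hx
    rw [Finset.mem_sort] at hx'
    exact (Finset.mem_sdiff.mp hx').2
  have h1 : (fillFrom C src dst).card
      = dst.card + (((src \ dst).sort (· ≤ ·)).take (C - dst.card)).toFinset.card := by
    rw [fillFrom, Finset.card_union_of_disjoint hdisj]
  have h2 : (((src \ dst).sort (· ≤ ·)).take (C - dst.card)).toFinset.card
      = min (C - dst.card) ((src \ dst)).card := by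
    rw [List.toFinset_card_of_nodup htake, List.length_take, Finset.length_sort]
  have h3 : (src \ dst).card + dst.card = (src ∪ dst).card := Finset.card_sdiff_add_card src dst
  omega

lemma subset_passPairs (C : ℕ) : ∀ (ps : List (ℕ × ℕ)) (M : ℕ → Finset ℕ) (i : ℕ),
    M i ⊆ passPairs C ps M i := by
  intro ps
  induction ps with
  | nil => intro M i; exact subset_rfl
  | cons p ps ih =>
    intro M i
    have h1 : M i ⊆ Function.update M p.2 (fillFrom C (M p.1) (M p.2)) i := by
      by_cases h : i = p.2
      · subst h; rw [Function.update_self]; exact fillFrom_subset _ _ _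
      · rw [Function.update_of_ne h]
    exact h1.trans (ih _ i)

lemma passPairs_concat (C : ℕ) (ps : List (ℕ × ℕ)) (p : ℕ × ℕ) (L : ℕ → Finset ℕ) :
    passPairs C (ps ++ [p]) L
      = Function.update (passPairs C ps L) p.2
          (fillFrom C (passPairs C ps L p.1) (passPairs C ps L p.2)) := by
  simp only [passPairs, List.foldl_append, List.foldl_cons, List.foldl_nil]

lemma fwd_aux (C n : ℕ) (L : ℕ → Finset ℕ)
    (hL : ∀ i ∈ Finset.Icc 1 n, (L i).card ≤ C) :
    ∀ k, k + 1 ≤ n →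
      (∀ j, k + 2 ≤ j → passPairs C ((List.range k).map fun i => (i + 1, i + 2)) L j = L j) ∧
      passPairs C ((List.range k).map fun i => (i + 1, i + 2)) L (k + 1)
        ⊆ (Finset.Icc 1 (k + 1)).biUnion L ∧
      (passPairs C ((List.range k).map fun i => (i + 1, i + 2)) L (k + 1)).card
        = min C ((Finset.Icc 1 (k + 1)).biUnion L).card ∧
      ∀ j ∈ Finset.Icc 1 n, (passPairs C ((List.range k).map fun i => (i + 1, i + 2)) L j).card ≤ C := by
  intro k
  induction k with
  | zero =>
    intro hk
    have e : passPairs C ((List.range 0).map fun i => (i + 1, i + 2)) L = L := rfl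
    rw [e]
    refine ⟨fun j _ => rfl, ?_, ?_, fun j hj => hL j hj⟩
    · rw [Finset.Icc_self, Finset.singleton_biUnion]
    · rw [Finset.Icc_self, Finset.singleton_biUnion]
      have := hL 1 (Finset.mem_Icc.mpr ⟨le_refl 1, hk⟩)
      show (L 1).card = min C (L 1).card
      omega
  | succ k ih =>
    intro hk
    obtain ⟨ih1, ih2, ih3, ih4⟩ := ih (by omega)
    set M := passPairs C ((List.range k).map fun i => (i + 1, i + 2)) L with hMdef
    have hconcat : passPairs C ((List.range (k + 1)).map fun i => (i + 1, i + 2)) L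
        = Function.update M (k + 2) (fillFrom C (M (k + 1)) (M (k + 2))) := by
      rw [List.range_succ, List.map_append, List.map_cons, List.map_nil, passPairs_concat]
    have hM2 : M (k + 2) = L (k + 2) := ih1 (k + 2) le_rfl
    have hdc : (L (k + 2)).card ≤ C := hL (k + 2) (Finset.mem_Icc.mpr ⟨by omega, by omega⟩)
    -- sets
    have hIcc : Finset.Icc 1 (k + 2) = insert (k + 2) (Finset.Icc 1 (k + 1)) := by
      ext x
      simp only [Finset.mem_Icc, Finset.mem_insert]
      omega
    have hB : (Finset.Icc 1 (k + 2)).biUnion L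
        = L (k + 2) ∪ (Finset.Icc 1 (k + 1)).biUnion L := by
      rw [hIcc, Finset.biUnion_insert]
    have hUB : M (k + 1) ∪ L (k + 2) ⊆ (Finset.Icc 1 (k + 2)).biUnion L := by
      rw [hB]
      exact Finset.union_subset (ih2.trans Finset.subset_union_right) Finset.subset_union_left
    have hnew : Function.update M (k + 2) (fillFrom C (M (k + 1)) (M (k + 2))) (k + 2)
        = fillFrom C (M (k + 1)) (L (k + 2)) := by
      rw [Function.update_self, hM2]
    have hcard : (fillFrom C (M (k + 1)) (L (k + 2))).card
        = min C ((M (k + 1) ∪ L (k + 2)).card) := fillFrom_card C _ _ hdc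
    have hcardB : (fillFrom C (M (k + 1)) (L (k + 2))).card
        = min C ((Finset.Icc 1 (k + 2)).biUnion L).card := by
      rw [hcard]
      have hle1 : (M (k + 1) ∪ L (k + 2)).card ≤ ((Finset.Icc 1 (k + 2)).biUnion L).card :=
        Finset.card_le_card hUB
      by_cases hc : C ≤ ((Finset.Icc 1 (k + 1)).biUnion L).card
      · have h1 : (M (k + 1)).card = C := by omega
        have h2 : (M (k + 1)).card ≤ (M (k + 1) ∪ L (k + 2)).card :=
          Finset.card_le_card Finset.subset_union_left
        omega
      · have heq : M (k + 1) = (Finset.Icc 1 (k + 1)).biUnion L :=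
          Finset.eq_of_subset_of_card_le ih2 (by omega)
        have : M (k + 1) ∪ L (k + 2) = (Finset.Icc 1 (k + 2)).biUnion L := by
          rw [heq, hB, Finset.union_comm]
        rw [this]
    refine ⟨?_, ?_, ?_, ?_⟩
    · intro j hj
      rw [hconcat, Function.update_of_ne (by omega)]
      exact ih1 j (by omega)
    · rw [hconcat, hnew]
      exact (fillFrom_subset_union C _ _).trans hUB
    · rw [hconcat, hnew, hcardB]
    · intro j hj
      rw [hconcat]
      by_cases h : j = k + 2
      · subst h
        rw [hnew, hcardB]
        omega
      · rw [Function.update_of_ne h]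
        exact ih4 j hj

lemma bwd_aux (C n : ℕ) (M0 : ℕ → Finset ℕ)
    (htop : (M0 n).card = C) (hle : ∀ j ∈ Finset.Icc 1 n, (M0 j).card ≤ C) :
    ∀ k, k ≤ n - 1 → 1 ≤ n →
      (∀ j ∈ Finset.Icc (n - k) n,
        (passPairs C ((List.range k).map fun i => (n - i, n - i - 1)) M0 j).card = C) ∧
      (∀ j ∈ Finset.Icc 1 n,
        (passPairs C ((List.range k).map fun i => (n - i, n - i - 1)) M0 j).card ≤ C) := by
  intro k
  induction k with
  | zero =>
    intro _ hn
    simp only [List.range_zero, List.map_nil, passPairs, List.foldl_nil]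
    refine ⟨?_, hle⟩
    intro j hj
    have : j = n := by
      rw [Finset.mem_Icc] at hj; omega
    subst this; exact htop
  | succ k ih =>
    intro hk hn
    obtain ⟨ih1, ih2⟩ := ih (by omega) hn
    set M := passPairs C ((List.range k).map fun i => (n - i, n - i - 1)) M0 with hMdef
    have hconcat : passPairs C ((List.range (k + 1)).map fun i => (n - i, n - i - 1)) M0
        = Function.update M (n - k - 1) (fillFrom C (M (n - k)) (M (n - k - 1))) := by
      rw [List.range_succ, List.map_append, List.map_cons, List.map_nil, passPairs_concat]
    have hdc : (M (n - k - 1)).card ≤ C := ih2 _ (Finset.mem_Icc.mpr ⟨by omega, by omega⟩)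
    have hsrc : (M (n - k)).card = C := ih1 _ (Finset.mem_Icc.mpr ⟨le_rfl, by omega⟩)
    have hcard : (fillFrom C (M (n - k)) (M (n - k - 1))).card = C := by
      rw [fillFrom_card C _ _ hdc]
      have := Finset.card_le_card (Finset.subset_union_left : M (n - k) ⊆ M (n - k) ∪ M (n - k - 1))
      omega
    refine ⟨?_, ?_⟩
    · intro j hj
      rw [Finset.mem_Icc] at hj
      rw [hconcat]
      by_cases h : j = n - k - 1
      · subst h; rw [Function.update_self]; exact hcard
      · rw [Function.update_of_ne h]
        exact ih1 j (Finset.mem_Icc.mpr ⟨by omega, hj.2⟩)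
    · intro j hj
      rw [hconcat]
      by_cases h : j = n - k - 1
      · subst h; rw [Function.update_self, hcard]
      · rw [Function.update_of_ne h]; exact ih2 j hj

/-- Statement 1 of Lemma 3: ToFullMag preserves feasibility and produces full magazines:
if `T i ⊆ L i` and `|L i| ≤ C` (with `m ≥ C`), then `M = ToFullMag(L)` satisfies
`T i ⊆ M i` and `|M i| = C` for all `i = 1,…,n`. -/
theorem toFullMag_feasible (n C : ℕ) (T L : ℕ → Finset ℕ) (hn : 1 ≤ n)
    (hfeas : ∀ i ∈ Finset.Icc 1 n, T i ⊆ L i ∧ (L i).card ≤ C)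
    (hm : C ≤ ((Finset.Icc 1 n).biUnion T).card) :
    ∀ i ∈ Finset.Icc 1 n, T i ⊆ toFullMag C n L i ∧ (toFullMag C n L i).card = C := by
  have hL : ∀ i ∈ Finset.Icc 1 n, (L i).card ≤ C := fun i hi => (hfeas i hi).2
  obtain ⟨f1, f2, f3, f4⟩ := fwd_aux C n L hL (n - 1) (by omega)
  have hn1 : n - 1 + 1 = n := by omega
  rw [hn1] at f2 f3
  have hCle : C ≤ ((Finset.Icc 1 n).biUnion L).card := by
    refine hm.trans (Finset.card_le_card ?_)
    intro x hx
    rw [Finset.mem_biUnion] at hx ⊢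
    obtain ⟨j, hj, hxj⟩ := hx
    exact ⟨j, hj, (hfeas j hj).1 hxj⟩
  have htop : (passPairs C (fwdPairs n) L n).card = C := by
    show (passPairs C ((List.range (n - 1)).map fun i => (i + 1, i + 2)) L n).card = C
    rw [f3]; omega
  have hle : ∀ j ∈ Finset.Icc 1 n, (passPairs C (fwdPairs n) L j).card ≤ C := f4
  obtain ⟨b1, _⟩ := bwd_aux C n (passPairs C (fwdPairs n) L) htop hle (n - 1) le_rfl hn
  intro i hi
  constructor
  · exact ((hfeas i hi).1.trans ((subset_passPairs C (fwdPairs n) L i).trans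
      (subset_passPairs C (bwdPairs n) (passPairs C (fwdPairs n) L) i)))
  · have : i ∈ Finset.Icc (n - (n - 1)) n := by
      rw [Finset.mem_Icc] at hi ⊢; omega
    exact b1 i this
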